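/- If there exist a symmetric positive definite matrix Q and a matrix R such that Q Aᵢᵀ + Aᵢ Q + Rᵀ Bᵢᵀ + Bᵢ R + 2βQ < 0 (negative definite) for all i = 1,…,N, then with K = R Q⁻¹, every matrix Aᵢ + Bᵢ K has all eigenvalues with real part strictly less than -β. -/

import Mathlib

/-!
If `μ` is an eigenvalue of `M = A + B R Q⁻¹`, pick a left eigenvector `w`, `w M = μ w`, and put
`v = w*`. Since `B R Q⁻¹ Q = B R`, the LMI matrix equals `M Q + Q Mᵀ + 2βQ`, whose quadratic form
at `v` is `2 (Re μ + β) v* Q v`. This is negative while `v* Q v > 0`, so `Re μ < -β`.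
-/

open Matrix
open scoped ComplexOrder MatrixOrder

variable {ι : Type*} [Fintype ι] [DecidableEq ι]

theorem Matrix.exists_vecMul_eq_smul_of_mem_spectrum {K : Type*} [Field K] {M : Matrix ι ι K}
    {μ : K} (hμ : μ ∈ spectrum K M) : ∃ w ≠ 0, w ᵥ* M = μ • w := by
  rw [mem_spectrum_iff_isRoot_charpoly, Polynomial.IsRoot, eval_charpoly] at hμ
  obtain ⟨w, hw0, hw⟩ := exists_vecMul_eq_zero_iff.mpr hμ
  refine ⟨w, hw0, ?_⟩
  rw [vecMul_sub, sub_eq_zero] at hw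
  simpa using hw.symm

theorem Matrix.lyapunov_closedLoop_eq {κ α : Type*} [Fintype κ] [CommRing α]
    (A : Matrix ι ι α) (B : Matrix ι κ α) (R : Matrix κ ι α) {Q : Matrix ι ι α}
    (hQ : IsUnit Q.det) (hQs : Qᵀ = Q) :
    (A + B * (R * Q⁻¹)) * Q + Q * (A + B * (R * Q⁻¹))ᵀ
      = Q * Aᵀ + A * Q + Rᵀ * Bᵀ + B * R := by
  have hBR : B * (R * Q⁻¹) * Q = B * R := by
    rw [← Matrix.mul_assoc, nonsing_inv_mul_cancel_right _ _ hQ]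
  have hRB : Q * (B * (R * Q⁻¹))ᵀ = Rᵀ * Bᵀ := by
    simpa only [transpose_mul, hQs] using congrArg transpose hBR
  rw [add_mul, transpose_add, mul_add, hBR, hRB]
  abel

variable {𝕜 : Type*} [RCLike 𝕜]

theorem Matrix.PosSemidef.map_ofReal {S : Matrix ι ι ℝ} (hS : S.PosSemidef) :
    (S.map ((↑) : ℝ → 𝕜)).PosSemidef := by
  obtain ⟨C, rfl⟩ := CStarAlgebra.nonneg_iff_eq_star_mul_self.mp hS.nonneg
  have hmap : (star C * C).map ((↑) : ℝ → 𝕜) = (C.map (↑))ᴴ * C.map (↑) := by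
    rw [Matrix.map_mul, star_eq_conjTranspose, conjTranspose_map]
    exact fun r => (RCLike.conj_ofReal r).symm
  rw [hmap]
  exact posSemidef_conjTranspose_mul_self _

theorem Matrix.PosDef.map_ofReal {S : Matrix ι ι ℝ} (hS : S.PosDef) :
    (S.map ((↑) : ℝ → 𝕜)).PosDef := by
  rw [hS.posSemidef.map_ofReal.posDef_iff_det_ne_zero]
  have hdet : (S.map ((↑) : ℝ → 𝕜)).det = S.det := (RingHom.map_det (algebraMap ℝ 𝕜) S).symm
  rw [hdet, RCLike.ofReal_ne_zero]
  exact hS.det_pos.ne'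

theorem Matrix.re_lt_of_mem_spectrum_of_lyapunov {M Q : Matrix ι ι 𝕜} {β : ℝ}
    (hQ : Q.PosDef) (hL : (-(M * Q + Q * Mᴴ + (2 * β) • Q)).PosDef)
    {μ : 𝕜} (hμ : μ ∈ spectrum 𝕜 M) : RCLike.re μ < -β := by
  obtain ⟨w, hw0, hw⟩ := exists_vecMul_eq_smul_of_mem_spectrum hμ
  set v := star w
  have hv : star v = w := star_star w
  have hv0 : v ≠ 0 := by simpa [v] using hw0
  have hMv : Mᴴ *ᵥ v = star μ • v := by rw [← star_vecMul, hw, star_smul]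
  set s := star v ⬝ᵥ Q *ᵥ v
  have hMQ : star v ⬝ᵥ (M * Q) *ᵥ v = μ * s := by
    rw [← mulVec_mulVec, dotProduct_mulVec, hv, hw, smul_dotProduct, ← hv, smul_eq_mul]
  have hQM : star v ⬝ᵥ (Q * Mᴴ) *ᵥ v = star μ * s := by
    rw [← mulVec_mulVec, hMv, mulVec_smul, dotProduct_smul, smul_eq_mul]
  have hquad : star v ⬝ᵥ (M * Q + Q * Mᴴ + (2 * β) • Q) *ᵥ v
      = ((2 * (RCLike.re μ + β) : ℝ) : 𝕜) * s := by
    rw [add_mulVec, add_mulVec, dotProduct_add, dotProduct_add, hMQ, hQM, smul_mulVec,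
      dotProduct_smul, RCLike.real_smul_eq_coe_mul, ← add_mul, ← add_mul, RCLike.star_def,
      RCLike.add_conj]
    push_cast
    ring
  have hs : 0 < RCLike.re s := (RCLike.pos_iff.mp (hQ.dotProduct_mulVec_pos hv0)).1
  have hneg := (RCLike.pos_iff.mp (hL.dotProduct_mulVec_pos hv0)).1
  rw [neg_mulVec, dotProduct_neg, hquad, map_neg, RCLike.re_ofReal_mul] at hneg
  nlinarith

theorem Matrix.re_lt_of_mem_spectrum_map_ofReal_of_lyapunov {M Q : Matrix ι ι ℝ} {β : ℝ}
    (hQ : Q.PosDef) (hL : (-(M * Q + Q * Mᵀ + (2 * β) • Q)).PosDef)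
    {μ : 𝕜} (hμ : μ ∈ spectrum 𝕜 (M.map ((↑) : ℝ → 𝕜))) : RCLike.re μ < -β := by
  refine re_lt_of_mem_spectrum_of_lyapunov hQ.map_ofReal ?_ hμ
  convert hL.map_ofReal (𝕜 := 𝕜) using 1
  rw [← conjTranspose_map _ fun r => (RCLike.conj_ofReal r).symm,
    conjTranspose_eq_transpose_of_trivial]
  have hf : ((↑) : ℝ → 𝕜) = Algebra.ofId ℝ 𝕜 := rfl
  simp only [hf, ← AlgHom.mapMatrix_apply, map_neg, map_add, map_mul, map_smul]

theorem lmi_vertex_stabilization_general (n m N : ℕ) (β : ℝ)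
    (A : Fin N → Matrix (Fin n) (Fin n) ℝ) (B : Fin N → Matrix (Fin n) (Fin m) ℝ)
    (Q : Matrix (Fin n) (Fin n) ℝ) (R : Matrix (Fin m) (Fin n) ℝ)
    (hQ : Q.PosDef)
    (hLMI : ∀ i : Fin N,
      (-(Q * (A i)ᵀ + A i * Q + Rᵀ * (B i)ᵀ + B i * R + (2 * β) • Q)).PosDef) :
    ∀ i : Fin N, ∀ μ ∈ spectrum ℂ ((A i + B i * (R * Q⁻¹)).map (Complex.ofReal)),
      μ.re < -β := by
  intro i μ hμ
  refine re_lt_of_mem_spectrum_map_ofReal_of_lyapunov hQ ?_ hμ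
  rw [lyapunov_closedLoop_eq _ _ _ (isUnit_iff_ne_zero.mpr hQ.det_pos.ne')
    (isHermitian_iff_isSymm.mp hQ.isHermitian).eq]
  exact hLMI i

theorem lmi_vertex_stabilization (n m N : ℕ) (β : ℝ) (hβ : 0 < β)
    (A : Fin N → Matrix (Fin n) (Fin n) ℝ) (B : Fin N → Matrix (Fin n) (Fin m) ℝ)
    (Q : Matrix (Fin n) (Fin n) ℝ) (R : Matrix (Fin m) (Fin n) ℝ)
    (hQ : Q.PosDef)
    (hLMI : ∀ i : Fin N,
      (-(Q * (A i)ᵀ + A i * Q + Rᵀ * (B i)ᵀ + B i * R + (2 * β) • Q)).PosDef) :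
    ∀ i : Fin N, ∀ μ ∈ spectrum ℂ ((A i + B i * (R * Q⁻¹)).map (Complex.ofReal)),
      μ.re < -β :=
  lmi_vertex_stabilization_general n m N β A B Q R hQ hLMI
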